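/- arXiv:1212.3385 — 2 statements merged into one kernel-verified Lean document; each statement's English description precedes it below -/
import Mathlib

section
/- Let P(t) = (∑_{i=0}^{n} ω_i p_i B_i^n(t)) / (∑_{i=0}^{n} ω_i B_i^n(t)) be a rational Bézier curve of degree n ≥ 2 with control points p_0, …, p_n ∈ ℝ^d and strictly positive weights ω_0, …, ω_n with ω_0 = ω_n = 1, and let Q(t) = ∑_{i=0}^{m} q_i B_i^m(t) be a Bézier curve of degree m ≥ 2. If q_0 = p_0, q_1 = (n/m) ω_1 p_1 + (1 − (n/m) ω_1) p_0, and q_2 = (1/(m(m−1))) { n(n−1) ω_2 p_2 + 2 n ω_1 (m − n ω_1) p_1 + [m(m−1) + 2 n ω_1 (n ω_1 − m) + n ω_2 (1 − n)] p_0 }, then Q(0) = P(0), Q′(0) = P′(0), and Q″(0) = P″(0). -/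
/-!
The derivative of a Bézier curve of degree `m` with control points `cᵢ` is the Bézier curve of
degree `m - 1` with control points `m (cᵢ₊₁ - cᵢ)`. Hence the 2-jet of a Bézier curve at `0` only
sees its first three control points: `c₀`, `m (c₁ - c₀)`, `m (m - 1) (c₂ - 2 c₁ + c₀)`.
The rational curve is `N⁻¹ • V` for the Bézier curves `N` with control points `ωᵢ` and `V` with
control points `ωᵢ pᵢ`, where `N 0 = ω₀ = 1`, so the quotient rule gives its 2-jet at `0` from
those of `N` and `V`; the choice of `q₀, q₁, q₂` makes the two jets agree.
-/

/-- The Bernstein polynomial `B_i^n(t) = C(n,i) t^i (1-t)^(n-i)`. -/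
noncomputable def bern (n i : ℕ) (t : ℝ) : ℝ :=
  (n.choose i : ℝ) * t ^ i * (1 - t) ^ (n - i)

open Finset

section Bezier

variable {E : Type*} [NormedAddCommGroup E] [NormedSpace ℝ E]

noncomputable def bezier (m : ℕ) (c : ℕ → E) (t : ℝ) : E :=
  ∑ i ∈ range (m + 1), bern m i t • c i

lemma bern_eq_eval (n i : ℕ) (t : ℝ) : bern n i t = (bernsteinPolynomial ℝ n i).eval t := by
  simp [bern, bernsteinPolynomial]

lemma bezier_zero (m : ℕ) (c : ℕ → E) : bezier m c 0 = c 0 := by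
  simp [bezier, bern_eq_eval, bernsteinPolynomial.eval_at_0]

lemma hasDerivAt_bezier (m : ℕ) (c : ℕ → E) (t : ℝ) :
    HasDerivAt (bezier m c) (bezier (m - 1) (fun i => (m : ℝ) • (c (i + 1) - c i)) t) t := by
  have h := HasDerivAt.fun_sum (u := range (m + 1)) fun i _ =>
    ((bernsteinPolynomial ℝ m i).hasDerivAt t).smul_const (c i)
  simp only [← bern_eq_eval] at h
  refine h.congr_deriv ?_
  -- for `m = 0` the truncated `m - 1` is harmless: the control points `(m : ℝ) • _` vanish
  rcases m with _ | k
  · simp [bezier, bernsteinPolynomial]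
  have hshift : ∑ i ∈ range (k + 1), bern k (i + 1) t • c (i + 1) + bern k 0 t • c 0 =
      ∑ i ∈ range (k + 1), bern k i t • c i := by
    -- the extra last term `bern k (k + 1) t • c (k + 1)` vanishes
    rw [← sum_range_succ' (fun i => bern k i t • c i), sum_range_succ]
    simp [bern]
  rw [sum_range_succ']
  simp only [bernsteinPolynomial.derivative_succ, bernsteinPolynomial.derivative_zero,
    Polynomial.eval_mul, Polynomial.eval_sub, Polynomial.eval_neg, Polynomial.eval_natCast,
    ← bern_eq_eval, Nat.add_sub_cancel, bezier, smul_sub,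
    smul_comm (bern k _ t) ((k + 1 : ℕ) : ℝ), ← smul_sum, sum_sub_distrib, mul_smul, sub_smul]
  rw [← hshift]
  module

lemma deriv_bezier (m : ℕ) (c : ℕ → E) :
    deriv (bezier m c) = bezier (m - 1) (fun i => (m : ℝ) • (c (i + 1) - c i)) :=
  funext fun t => (hasDerivAt_bezier m c t).deriv

lemma differentiable_bezier (m : ℕ) (c : ℕ → E) : Differentiable ℝ (bezier m c) :=
  fun t => (hasDerivAt_bezier m c t).differentiableAt

lemma differentiable_deriv_bezier (m : ℕ) (c : ℕ → E) :
    Differentiable ℝ (deriv (bezier m c)) := by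
  rw [deriv_bezier]
  exact differentiable_bezier _ _

lemma deriv_bezier_zero (m : ℕ) (c : ℕ → E) : deriv (bezier m c) 0 = (m : ℝ) • (c 1 - c 0) := by
  rw [deriv_bezier, bezier_zero]

lemma deriv_deriv_bezier_zero (m : ℕ) (c : ℕ → E) :
    deriv (deriv (bezier m c)) 0 = ((m : ℝ) * (m - 1)) • (c 2 - 2 • c 1 + c 0) := by
  rw [deriv_bezier, deriv_bezier_zero]
  rcases m with _ | k
  · simp
  · push_cast
    module

end Bezier

section Quotient

open Filter Topology

variable {E : Type*} [NormedAddCommGroup E] [NormedSpace ℝ E] {N : ℝ → ℝ} {V : ℝ → E} {x : ℝ}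

lemma deriv_inv_smul (hN : DifferentiableAt ℝ N x) (hV : DifferentiableAt ℝ V x) (hx : N x ≠ 0) :
    deriv (fun t => (N t)⁻¹ • V t) x = (N x)⁻¹ • deriv V x - (deriv N x / N x ^ 2) • V x := by
  rw [((hN.hasDerivAt.fun_inv hx).fun_smul hV.hasDerivAt).deriv, neg_div, neg_smul,
    ← sub_eq_add_neg]

lemma deriv_deriv_inv_smul (hN : ∀ᶠ t in 𝓝 x, DifferentiableAt ℝ N t)
    (hV : ∀ᶠ t in 𝓝 x, DifferentiableAt ℝ V t) (hN' : DifferentiableAt ℝ (deriv N) x)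
    (hV' : DifferentiableAt ℝ (deriv V) x) (hx : N x ≠ 0) :
    deriv (deriv fun t => (N t)⁻¹ • V t) x =
      (N x)⁻¹ • deriv (deriv V) x - (2 * deriv N x / N x ^ 2) • deriv V x +
        (2 * deriv N x ^ 2 / N x ^ 3 - deriv (deriv N) x / N x ^ 2) • V x := by
  have hNx : ∀ᶠ t in 𝓝 x, N t ≠ 0 := hN.self_of_nhds.continuousAt.eventually_ne hx
  have hderiv : deriv (fun t => (N t)⁻¹ • V t) =ᶠ[𝓝 x]
      fun t => (N t)⁻¹ • deriv V t - (deriv N t / N t ^ 2) • V t :=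
    (hN.and (hV.and hNx)).mono fun t ⟨hNt, hVt, ht⟩ => deriv_inv_smul hNt hVt ht
  have hN₀ := hN.self_of_nhds.hasDerivAt
  have h₁ := (hN₀.fun_inv hx).fun_smul hV'.hasDerivAt
  have h₂ := (hN'.hasDerivAt.fun_div (hN₀.fun_pow 2) (pow_ne_zero 2 hx)).fun_smul
    hV.self_of_nhds.hasDerivAt
  rw [hderiv.deriv_eq, (h₁.fun_sub h₂).deriv]
  match_scalars <;> field_simp <;> ring

end Quotient

theorem constrained_contact_at_zero_general (n : ℕ) (d : ℕ)
    (p : ℕ → EuclideanSpace ℝ (Fin d)) (ω : ℕ → ℝ)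
    (hω0 : ω 0 = 1)
    (P : ℝ → EuclideanSpace ℝ (Fin d))
    (hP : ∀ t, P t = (∑ i ∈ Finset.range (n + 1), ω i * bern n i t)⁻¹ •
        ∑ i ∈ Finset.range (n + 1), (ω i * bern n i t) • p i)
    (m : ℕ) (hm : 2 ≤ m)
    (q : ℕ → EuclideanSpace ℝ (Fin d))
    (Q : ℝ → EuclideanSpace ℝ (Fin d))
    (hQ : ∀ t, Q t = ∑ i ∈ Finset.range (m + 1), bern m i t • q i)
    (hq0 : q 0 = p 0)
    (hq1 : q 1 = ((n : ℝ) / m * ω 1) • p 1 + (1 - (n : ℝ) / m * ω 1) • p 0)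
    (hq2 : q 2 = (1 / ((m : ℝ) * ((m : ℝ) - 1))) •
        (((n : ℝ) * ((n : ℝ) - 1) * ω 2) • p 2 +
          (2 * (n : ℝ) * ω 1 * ((m : ℝ) - (n : ℝ) * ω 1)) • p 1 +
          ((m : ℝ) * ((m : ℝ) - 1) + 2 * (n : ℝ) * ω 1 * ((n : ℝ) * ω 1 - (m : ℝ)) +
            (n : ℝ) * ω 2 * (1 - (n : ℝ))) • p 0)) :
    Q 0 = P 0 ∧ deriv Q 0 = deriv P 0 ∧ deriv (deriv Q) 0 = deriv (deriv P) 0 := by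
  obtain rfl : Q = bezier m q := funext hQ
  obtain rfl : P = fun t => (bezier n ω t)⁻¹ • bezier n (fun i => ω i • p i) t := by
    funext t
    simp only [hP, bezier, smul_eq_mul, mul_comm (ω _), mul_smul]
  have hN0 : bezier n ω 0 ≠ 0 := by simp [bezier_zero, hω0]
  have hm2 : (2 : ℝ) ≤ m := mod_cast hm
  have hm0 : (m : ℝ) ≠ 0 := ne_of_gt (by linarith)
  have hm1 : (m : ℝ) - 1 ≠ 0 := ne_of_gt (by linarith)
  refine ⟨by simp [bezier_zero, hq0, hω0], ?_, ?_⟩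
  · rw [deriv_inv_smul (differentiable_bezier n ω 0) (differentiable_bezier _ _ 0) hN0]
    simp only [deriv_bezier_zero, bezier_zero, hq0, hq1, hω0, smul_eq_mul]
    match_scalars
    · field_simp
    · field_simp; ring
  · rw [deriv_deriv_inv_smul (.of_forall (differentiable_bezier n ω))
        (.of_forall (differentiable_bezier _ _)) (differentiable_deriv_bezier n ω 0)
        (differentiable_deriv_bezier _ _ 0) hN0]
    simp only [deriv_deriv_bezier_zero, deriv_bezier_zero, bezier_zero, hq0, hq1, hq2, hω0,
      smul_eq_mul]
    match_scalars <;> field_simp <;> ring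

theorem constrained_contact_at_zero (n : ℕ) (hn : 2 ≤ n) (d : ℕ)
    (p : ℕ → EuclideanSpace ℝ (Fin d)) (ω : ℕ → ℝ)
    (hω : ∀ i ≤ n, 0 < ω i) (hω0 : ω 0 = 1) (hωn : ω n = 1)
    (P : ℝ → EuclideanSpace ℝ (Fin d))
    (hP : ∀ t, P t = (∑ i ∈ Finset.range (n + 1), ω i * bern n i t)⁻¹ •
        ∑ i ∈ Finset.range (n + 1), (ω i * bern n i t) • p i)
    (m : ℕ) (hm : 2 ≤ m)
    (q : ℕ → EuclideanSpace ℝ (Fin d))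
    (Q : ℝ → EuclideanSpace ℝ (Fin d))
    (hQ : ∀ t, Q t = ∑ i ∈ Finset.range (m + 1), bern m i t • q i)
    (hq0 : q 0 = p 0)
    (hq1 : q 1 = ((n : ℝ) / m * ω 1) • p 1 + (1 - (n : ℝ) / m * ω 1) • p 0)
    (hq2 : q 2 = (1 / ((m : ℝ) * ((m : ℝ) - 1))) •
        (((n : ℝ) * ((n : ℝ) - 1) * ω 2) • p 2 +
          (2 * (n : ℝ) * ω 1 * ((m : ℝ) - (n : ℝ) * ω 1)) • p 1 +
          ((m : ℝ) * ((m : ℝ) - 1) + 2 * (n : ℝ) * ω 1 * ((n : ℝ) * ω 1 - (m : ℝ)) +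
            (n : ℝ) * ω 2 * (1 - (n : ℝ))) • p 0)) :
    Q 0 = P 0 ∧ deriv Q 0 = deriv P 0 ∧ deriv (deriv Q) 0 = deriv (deriv P) 0 :=
  constrained_contact_at_zero_general n d p ω hω0 P hP m hm q Q hQ hq0 hq1 hq2
end

section
/- Let n and m be natural numbers with indices 0 ≤ i ≤ m, 0 ≤ j ≤ n, 0 ≤ l ≤ m. Then ∫_0^1 B_i^m(t) B_j^n(t) B_l^m(t) dt = C(m, i) · C(n, j) · C(m, l) / ((2m + n + 1) · C(2m + n, i + j + l)). -/
open Nat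

theorem integral_pow_mul_one_sub_pow (a b : ℕ) :
    ∫ t in (0:ℝ)..1, t ^ a * (1 - t) ^ b = a ! * b ! / (a + b + 1)! := by
  have hbeta : Complex.betaIntegral (a + 1) (b + 1)
      = ((∫ t in (0:ℝ)..1, t ^ a * (1 - t) ^ b : ℝ) : ℂ) := by
    rw [Complex.betaIntegral, ← intervalIntegral.integral_ofReal]
    refine intervalIntegral.integral_congr fun t _ => ?_
    simp only [add_sub_cancel_right, Complex.cpow_natCast]
    push_cast
    rfl
  rw [Complex.betaIntegral_eq_Gamma_mul_div _ _ (by simp; positivity) (by simp; positivity),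
    show (a : ℂ) + 1 + (b + 1) = ((a + b + 1 : ℕ) : ℂ) + 1 by push_cast; ring,
    Complex.Gamma_nat_eq_factorial, Complex.Gamma_nat_eq_factorial,
    Complex.Gamma_nat_eq_factorial] at hbeta
  exact Complex.ofReal_injective (by push_cast; exact hbeta.symm)

theorem bern_mul_bern {m n i j : ℕ} (hi : i ≤ m) (hj : j ≤ n) (t : ℝ) :
    bern m i t * bern n j t
      = m.choose i * n.choose j / (m + n).choose (i + j) * bern (m + n) (i + j) t := by
  have hchoose : ((m + n).choose (i + j) : ℝ) ≠ 0 := by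
    exact_mod_cast (Nat.choose_pos (by omega)).ne'
  rw [bern, bern, bern, show m + n - (i + j) = (m - i) + (n - j) by omega]
  field_simp
  ring

theorem integral_bern {n k : ℕ} (hk : k ≤ n) : ∫ t in (0:ℝ)..1, bern n k t = 1 / (n + 1) := by
  simp_rw [bern, mul_assoc]
  rw [intervalIntegral.integral_const_mul, integral_pow_mul_one_sub_pow,
    Nat.add_sub_cancel' hk, Nat.cast_choose ℝ hk, Nat.factorial_succ]
  have := (n - k).factorial_ne_zero
  have := k.factorial_ne_zero
  push_cast
  field_simp

theorem bernstein_triple_integral (n m i j l : ℕ)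
    (hi : i ≤ m) (hj : j ≤ n) (hl : l ≤ m) :
    ∫ t in (0:ℝ)..1, bern m i t * bern n j t * bern m l t
      = (m.choose i : ℝ) * (n.choose j : ℝ) * (m.choose l : ℝ)
          / ((2 * (m : ℝ) + n + 1) * ((2 * m + n).choose (i + j + l) : ℝ)) := by
  have hij : i + j ≤ m + n := by omega
  have hchoose : ((m + n).choose (i + j) : ℝ) ≠ 0 := by
    exact_mod_cast (Nat.choose_pos hij).ne'
  simp_rw [bern_mul_bern hi hj, mul_assoc, bern_mul_bern hij hl]
  rw [intervalIntegral.integral_const_mul, intervalIntegral.integral_const_mul,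
    integral_bern (by omega), show m + n + m = 2 * m + n by ring]
  push_cast
  field_simp
end
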